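/- arXiv:1311.2032 — 2 statements merged into one kernel-verified Lean document; each statement's English description precedes it below -/
import Mathlib

section
/- For every finite set P ⊆ ℝ², the Semi-Yao graph SYG(P) is a supergraph of the nearest neighbor graph NNG(P): every directed edge of NNG(P) is a directed edge of SYG(P). -/
/- Common geometric setup: the Euclidean plane, wedges `W_l`, bisectors `b_l`,
equilateral triangles `∆_l` and `l`-tri's, circular sectors `σ_l` and `l`-pies,
and the proximity graphs (Semi-Yao, nearest-neighbor, Equilateral/Pie Delaunay,
Yao) together with Euclidean minimum spanning trees. -/

open Real EuclideanGeometry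
open scoped RealInnerProductSpace

noncomputable section

abbrev E : Type := EuclideanSpace ℝ (Fin 2)

/-- The point `(a, b)` in the Euclidean plane. -/
def pt (a b : ℝ) : E := (WithLp.equiv 2 (Fin 2 → ℝ)).symm ![a, b]

/-- The unit vector at polar angle `θ`. -/
def dir (θ : ℝ) : E := pt (Real.cos θ) (Real.sin θ)

/-- The lower boundary angle `(2l-1)π/6` of the `l`-th wedge. -/
def lo (l : Fin 6) : ℝ := (2 * ((l : ℕ) : ℝ) - 1) * π / 6

/-- The upper boundary angle `(2l+1)π/6` of the `l`-th wedge. -/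
def hi (l : Fin 6) : ℝ := (2 * ((l : ℕ) : ℝ) + 1) * π / 6

/-- The half-open wedge `W_l`: all nonzero points whose polar angle (mod `2π`)
lies in `[(2l-1)π/6, (2l+1)π/6)`. -/
def wedge (l : Fin 6) : Set E :=
  {x | x ≠ 0 ∧ ∃ θ : ℝ, lo l ≤ θ ∧ θ < hi l ∧ x = ‖x‖ • dir θ}

/-- `W_l(p)`, the translate of `W_l` with apex `p`. -/
def wedgeAt (l : Fin 6) (p : E) : Set E := {x | x - p ∈ wedge l}

/-- The unit bisector vector `b_l = (cos(lπ/3), sin(lπ/3))` of `W_l`. -/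
def bvec (l : Fin 6) : E := dir (((l : ℕ) : ℝ) * π / 3)

/-- `V_l(p) = P ∩ W_l(p)`. -/
def Vl (P : Finset E) (l : Fin 6) (p : E) : Set E := {x | x ∈ P ∧ x ∈ wedgeAt l p}

/-- The closed equilateral triangle `∆_l` with vertices `0`, `dir ((2l-1)π/6)`,
`dir ((2l+1)π/6)`. -/
def tri (l : Fin 6) : Set E := convexHull ℝ {0, dir (lo l), dir (hi l)}

/-- The vertex set of `∆_l`. -/
def triVerts (l : Fin 6) : Set E := {0, dir (lo l), dir (hi l)}

/-- The `l`-tri `c + lam • ∆_l`. -/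
def lTri (l : Fin 6) (c : E) (lam : ℝ) : Set E := (fun x => c + lam • x) '' tri l

/-- The closed circular sector (piece of pie) `σ_l` of the unit disk. -/
def sector (l : Fin 6) : Set E :=
  {x | ‖x‖ ≤ 1 ∧ (x = 0 ∨ ∃ θ : ℝ, lo l ≤ θ ∧ θ ≤ hi l ∧ x = ‖x‖ • dir θ)}

/-- The `l`-pie `c + lam • σ_l`. -/
def lPie (l : Fin 6) (c : E) (lam : ℝ) : Set E := (fun x => c + lam • x) '' sector l

/-- Directed Semi-Yao graph edge from `a` to `b`: `a ∈ V_l(b)` for some `l` and `a`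
has the minimum `b_l`-coordinate among the points of `V_l(b)`. -/
def SYG (P : Finset E) (a b : E) : Prop :=
  b ∈ P ∧ ∃ l : Fin 6, a ∈ Vl P l b ∧
    ∀ r ∈ Vl P l b, ⟪a - b, bvec l⟫ ≤ ⟪r - b, bvec l⟫

/-- Undirected Semi-Yao graph edge. -/
def SYGu (P : Finset E) (p q : E) : Prop := SYG P p q ∨ SYG P q p

/-- Directed nearest-neighbor graph edge from `a` to `b`: `b ∈ P \ {a}` and
`‖a - b‖ = min_{r ∈ P \ {a}} ‖a - r‖`. -/
def NNG (P : Finset E) (a b : E) : Prop :=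
  a ∈ P ∧ b ∈ P ∧ b ≠ a ∧ ∀ r ∈ P, r ≠ a → ‖a - b‖ ≤ ‖a - r‖

/-- Edge of the Equilateral Delaunay triangulation `EDT_l(P)`: there is an `l`-tri,
empty with respect to `P`, with both endpoints on its boundary. -/
def EDT (P : Finset E) (l : Fin 6) (p q : E) : Prop :=
  p ∈ P ∧ q ∈ P ∧ p ≠ q ∧ ∃ c : E, ∃ lam : ℝ, 0 < lam ∧
    p ∈ frontier (lTri l c lam) ∧ q ∈ frontier (lTri l c lam) ∧
    ∀ r ∈ P, r ∉ interior (lTri l c lam)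

/-- Edge of the Equilateral Delaunay graph `EDG(P) = EDT_0(P) ∪ EDT_1(P)`. -/
def EDG (P : Finset E) (p q : E) : Prop := EDT P 0 p q ∨ EDT P 1 p q

/-- Directed Yao-graph edge from `p` to `q`: `q ∈ V_l(p)` for some `l` and
`‖p - q‖ = min_{r ∈ V_l(p)} ‖p - r‖`. -/
def YG (P : Finset E) (p q : E) : Prop :=
  p ∈ P ∧ ∃ l : Fin 6, q ∈ Vl P l p ∧ ∀ r ∈ Vl P l p, ‖p - q‖ ≤ ‖p - r‖

/-- Edge of the Pie Delaunay triangulation `PDT_l(P)`: there is an `l`-pie, empty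
with respect to `P`, with both endpoints on its boundary. -/
def PDT (P : Finset E) (l : Fin 6) (p q : E) : Prop :=
  p ∈ P ∧ q ∈ P ∧ p ≠ q ∧ ∃ c : E, ∃ lam : ℝ, 0 < lam ∧
    p ∈ frontier (lPie l c lam) ∧ q ∈ frontier (lPie l c lam) ∧
    ∀ r ∈ P, r ∉ interior (lPie l c lam)

/-- Edge of the Pie Delaunay graph `PDG(P) = PDT_0(P) ∪ ⋯ ∪ PDT_5(P)`. -/
def PDG (P : Finset E) (p q : E) : Prop := ∃ l : Fin 6, PDT P l p q

/-- Total Euclidean edge weight of a graph on the points of `P`. -/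
def edgeWeight (P : Finset E) (G : SimpleGraph {x // x ∈ P}) : ℝ :=
  ∑ e ∈ G.edgeSet.toFinite.toFinset,
    Sym2.lift ⟨fun (a b : {x // x ∈ P}) => ‖(a : E) - (b : E)‖,
      fun _ _ => norm_sub_rev _ _⟩ e

/-- `T` is a Euclidean minimum spanning tree of `P`: a spanning tree (connected and
acyclic graph on the vertex set `P`) of minimum total Euclidean edge weight. -/
def IsEMST (P : Finset E) (T : SimpleGraph {x // x ∈ P}) : Prop :=
  T.IsTree ∧ ∀ G : SimpleGraph {x // x ∈ P}, G.IsTree → edgeWeight P T ≤ edgeWeight P G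

/- Let `x = p - q`, lying in the wedge `W_l`, and suppose some `r ∈ V_l(q)` has a smaller
`b_l`-coordinate; put `y = r - q`. Measure the angles `α, β ∈ [-π/6, π/6)` of `x, y` from `b_l`.
Since `α - 2β ∈ (-π/2, π/2)`, the identity `cos α + cos (α - 2β) = 2 cos (α - β) cos β` turns
`‖y‖ cos β < ‖x‖ cos α` into `‖y‖ < 2 ‖x‖ cos (α - β)`, i.e. `‖y‖² < 2 ⟪x, y⟫`, which says
`‖p - r‖ = ‖x - y‖ < ‖x‖ = ‖p - q‖`: `q` was not nearest to `p`. -/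

lemma inner_dir (θ φ : ℝ) : ⟪dir θ, dir φ⟫ = cos (θ - φ) := by
  simp [dir, pt, PiLp.inner_apply, Fin.sum_univ_two, Real.cos_sub, mul_comm]

lemma dir_sub_int_mul_two_pi (θ : ℝ) (n : ℤ) : dir (θ - n * (2 * π)) = dir θ := by
  rw [dir, dir, Real.cos_sub_int_mul_two_pi, Real.sin_sub_int_mul_two_pi]

lemma exists_eq_norm_smul_dir (v : E) : ∃ θ : ℝ, v = ‖v‖ • dir θ := by
  set z : ℂ := ⟨v 0, v 1⟩
  have hz : ‖z‖ = ‖v‖ := by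
    rw [Complex.norm_def, Complex.normSq_mk, EuclideanSpace.norm_eq, Fin.sum_univ_two]
    simp [sq]
  refine ⟨z.arg, ?_⟩
  ext i
  fin_cases i
  · simp [dir, pt, ← hz, Complex.norm_mul_cos_arg, z]
  · simp [dir, pt, ← hz, Complex.norm_mul_sin_arg, z]

lemma exists_lo_le_lt_hi {θ : ℝ} (h₁ : -(π / 6) ≤ θ) (h₂ : θ < -(π / 6) + 2 * π) :
    ∃ l : Fin 6, lo l ≤ θ ∧ θ < hi l := by
  have hπ := Real.pi_pos
  set k : ℤ := ⌊(θ + π / 6) * 3 / π⌋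
  have hk : (k : ℝ) ≤ (θ + π / 6) * 3 / π := Int.floor_le _
  have hk' : (θ + π / 6) * 3 / π < k + 1 := Int.lt_floor_add_one _
  rw [le_div_iff₀ hπ] at hk
  rw [div_lt_iff₀ hπ] at hk'
  have hk0 : 0 ≤ k := by exact_mod_cast (by nlinarith : (-1 : ℝ) < k)
  have hk6 : k < 6 := by exact_mod_cast (by nlinarith : (k : ℝ) < 6)
  have hcast : ((k.toNat : ℕ) : ℝ) = k := by exact_mod_cast Int.toNat_of_nonneg hk0
  refine ⟨⟨k.toNat, by omega⟩, ?_, ?_⟩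
  · simp only [lo, hcast]; linarith
  · simp only [hi, hcast]; linarith

lemma exists_mem_wedge {v : E} (hv : v ≠ 0) : ∃ l : Fin 6, v ∈ wedge l := by
  obtain ⟨θ, hθ⟩ := exists_eq_norm_smul_dir v
  set θ' := toIcoMod Real.two_pi_pos (-(π / 6)) θ
  obtain ⟨h₁, h₂⟩ := toIcoMod_mem_Ico Real.two_pi_pos (-(π / 6)) θ
  obtain ⟨l, hlo, hhi⟩ := exists_lo_le_lt_hi h₁ h₂
  have hdir : dir θ' = dir θ := by
    rw [← dir_sub_int_mul_two_pi θ (toIcoDiv Real.two_pi_pos (-(π / 6)) θ),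
      ← self_sub_toIcoMod_eq_mul, sub_sub_cancel]
  exact ⟨l, hv, θ', hlo, hhi, hdir ▸ hθ⟩

lemma exists_eq_norm_smul_dir_of_mem_wedge {l : Fin 6} {x : E} (hx : x ∈ wedge l) :
    ∃ β : ℝ, -(π / 6) ≤ β ∧ β < π / 6 ∧ x = ‖x‖ • dir ((l : ℕ) * π / 3 + β) := by
  obtain ⟨-, θ, hlo, hhi, hθ⟩ := hx
  refine ⟨θ - (l : ℕ) * π / 3, ?_, ?_, ?_⟩
  · rw [lo] at hlo; linarith
  · rw [hi] at hhi; linarith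
  · rwa [add_sub_cancel]

lemma lt_two_mul_mul_cos_sub {α β s t : ℝ} (hα : -(π / 6) ≤ α ∧ α < π / 6)
    (hβ : -(π / 6) ≤ β ∧ β < π / 6) (hs : 0 ≤ s) (h : t * cos β < s * cos α) :
    t < 2 * s * cos (α - β) := by
  have hcosβ : 0 < cos β := cos_pos_of_mem_Ioo ⟨by linarith, by linarith⟩
  -- `α - 2β` stays in `(-π/2, π/2)` because both angles lie in the half-open `[-π/6, π/6)`
  have hcos : 0 < cos (α - 2 * β) := cos_pos_of_mem_Ioo ⟨by linarith, by linarith⟩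
  have hsum : cos α + cos (α - 2 * β) = 2 * cos (α - β) * cos β := by
    rw [cos_add_cos]; ring_nf
  refine lt_of_mul_lt_mul_right ?_ hcosβ.le
  calc t * cos β < s * cos α := h
    _ ≤ s * cos α + s * cos (α - 2 * β) := le_add_of_nonneg_right (by positivity)
    _ = 2 * s * cos (α - β) * cos β := by rw [← mul_add, hsum]; ring

lemma norm_sub_lt_norm_of_inner_bvec_lt {l : Fin 6} {x y : E} (hx : x ∈ wedge l)
    (hy : y ∈ wedge l) (h : ⟪y, bvec l⟫ < ⟪x, bvec l⟫) : ‖x - y‖ < ‖x‖ := by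
  obtain ⟨α, hα₁, hα₂, hxα⟩ := exists_eq_norm_smul_dir_of_mem_wedge hx
  obtain ⟨β, hβ₁, hβ₂, hyβ⟩ := exists_eq_norm_smul_dir_of_mem_wedge hy
  have ht : 0 < ‖y‖ := norm_pos_iff.mpr hy.1
  set s := ‖x‖
  set t := ‖y‖
  have hxb : ⟪x, bvec l⟫ = s * cos α := by
    rw [hxα, bvec, real_inner_smul_left, inner_dir, add_sub_cancel_left]
  have hyb : ⟪y, bvec l⟫ = t * cos β := by
    rw [hyβ, bvec, real_inner_smul_left, inner_dir, add_sub_cancel_left]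
  have hxy : ⟪x, y⟫ = s * t * cos (α - β) := by
    rw [hxα, hyβ, real_inner_smul_left, real_inner_smul_right, inner_dir, add_sub_add_left_eq_sub]
    ring
  have hlt : t < 2 * s * cos (α - β) :=
    lt_two_mul_mul_cos_sub ⟨hα₁, hα₂⟩ ⟨hβ₁, hβ₂⟩ (norm_nonneg x) (hyb ▸ hxb ▸ h)
  have hsq : ‖x - y‖ ^ 2 < s ^ 2 := by
    rw [norm_sub_sq_real, hxy]
    nlinarith
  exact lt_of_pow_lt_pow_left₀ 2 (norm_nonneg x) hsq

/-- the Semi-Yao graph is a supergraph of the nearest neighbor graph: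
every directed edge of `NNG(P)` is a directed edge of `SYG(P)`. -/
theorem semiYao_supergraph_of_nearestNeighborGraph
    (P : Finset E) (p q : E) (h : NNG P p q) : SYG P p q := by
  obtain ⟨hp, hq, hqp, hnearest⟩ := h
  obtain ⟨l, hl⟩ := exists_mem_wedge (sub_ne_zero.mpr hqp.symm)
  refine ⟨hq, l, ⟨hp, hl⟩, fun r hr => le_of_not_gt fun hlt => ?_⟩
  have hrp : r ≠ p := by rintro rfl; exact lt_irrefl _ hlt
  have hcloser : ‖(p - q) - (r - q)‖ < ‖p - q‖ :=
    norm_sub_lt_norm_of_inner_bvec_lt hl hr.2 hlt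
  rw [sub_sub_sub_cancel_right] at hcloser
  exact (hnearest r hr.1 hrp).not_gt hcloser
end
end

section
/- Let P ⊆ ℝ² be finite, p_i ∈ P, l ∈ {0,…,5}, and p_j ∈ V_l(p_i) with ⟨p_j − p_i, b_l⟩ = min_{r ∈ V_l(p_i)} ⟨r − p_i, b_l⟩. Then the set T = {p_i} ∪ {x ∈ closure(W_l(p_i)) : ⟨x − p_i, b_l⟩ ≤ ⟨p_j − p_i, b_l⟩} is an l-tri — namely T = p_i + λ∆_l with λ = (2/√3)·⟨p_j − p_i, b_l⟩ — which is empty with respect to P, has p_i as one of its vertices, and has p_j on its boundary (on the side opposite p_i). -/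
/- Common geometric setup: the Euclidean plane, wedges `W_l`, bisectors `b_l`,
equilateral triangles `∆_l` and `l`-tri's, circular sectors `σ_l` and `l`-pies,
and the proximity graphs (Semi-Yao, nearest-neighbor, Equilateral/Pie Delaunay,
Yao) together with Euclidean minimum spanning trees. -/

open Real EuclideanGeometry
open scoped RealInnerProductSpace

noncomputable section

/-! Let `u = dir (lo l)` and `v = dir (hi l)` span the wedge `W_l`, and let `n₋ ⊥ u` and
`n₊ ⊥ v` be its inward unit normals (`normalLo l`, `normalHi l`), so that `b_l = n₋ + n₊` and
`W_l = {x | 0 ≤ ⟪x, n₋⟫ ∧ 0 < ⟪x, n₊⟫}`. As `⟪u, n₊⟫ = ⟪v, n₋⟫ = √3/2`, every `x` equals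
`(2/√3)(⟪x, n₊⟫ u + ⟪x, n₋⟫ v)`, so `∆_l` is the part of the closed wedge where
`⟪x, b_l⟫ ≤ √3/2`. Hence `T = p_i + λ∆_l`, and the interior of `T` is the part of the open wedge
`W_l(p_i)` strictly below `p_j` in the direction `b_l`, which by minimality of `p_j` misses `P`. -/

open Filter Topology

theorem interior_setOf_inner_sub_mem {F : Type*} [NormedAddCommGroup F] [InnerProductSpace ℝ F]
    {v : F} (hv : v ≠ 0) (p : F) (s : Set ℝ) :
    interior {x | ⟪x - p, v⟫ ∈ s} = {x | ⟪x - p, v⟫ ∈ interior s} := by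
  have hf : innerSL ℝ v ≠ 0 := fun h => by simpa [hv] using congrArg (· v) h
  have hopen : IsOpenMap fun x : F => ⟪x - p, v⟫ := by
    simpa [Function.comp_def, real_inner_comm] using
      ((innerSL ℝ v).isOpenMap_of_ne_zero hf).comp (Homeomorph.subRight p).isOpenMap
  exact (hopen.preimage_interior_eq_interior_preimage (by fun_prop) s).symm

theorem inner_pt (a b c d : ℝ) : ⟪pt a b, pt c d⟫ = a * c + b * d := by
  simp only [pt, WithLp.equiv_symm_apply, PiLp.inner_apply, RCLike.inner_apply, ringHom_apply,
    Fin.sum_univ_two, Matrix.cons_val_zero, Matrix.cons_val_one, Matrix.cons_val_fin_one]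
  ring

theorem inner_dir_s3 (α β : ℝ) : ⟪dir α, dir β⟫ = Real.cos (α - β) := by
  rw [dir, dir, inner_pt, Real.cos_sub]

theorem norm_dir (θ : ℝ) : ‖dir θ‖ = 1 := by
  rw [← Real.sqrt_one, ← Real.sin_sq_add_cos_sq θ, EuclideanSpace.norm_eq]
  simp [dir, pt, Fin.sum_univ_two]

theorem dir_ne_zero (θ : ℝ) : dir θ ≠ 0 :=
  norm_ne_zero_iff.mp (by rw [norm_dir]; exact one_ne_zero)

theorem eq_pt (x : E) : x = pt (x 0) (x 1) := by
  ext i; fin_cases i <;> simp [pt]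

theorem exists_eq_norm_smul_dir_s3 {x : E} (hx : x ≠ 0) (a : ℝ) :
    ∃ θ ∈ Set.Ico a (a + 2 * π), x = ‖x‖ • dir θ := by
  set z : ℂ := ⟨x 0, x 1⟩
  have hz : z ≠ 0 := fun h => hx <| by
    rw [eq_pt x, show x 0 = 0 from congrArg Complex.re h, show x 1 = 0 from congrArg Complex.im h]
    ext i; fin_cases i <;> simp [pt]
  have hnorm : ‖z‖ = ‖x‖ := by
    rw [Complex.norm_def, Complex.normSq_apply, EuclideanSpace.norm_eq]
    simp [z, Fin.sum_univ_two, sq]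
  have hnorm0 : ‖x‖ ≠ 0 := hnorm ▸ norm_ne_zero_iff.mpr hz
  refine ⟨toIcoMod two_pi_pos a z.arg, toIcoMod_mem_Ico _ _ _, ?_⟩
  have hmod : toIcoMod two_pi_pos a z.arg = z.arg - toIcoDiv two_pi_pos a z.arg * (2 * π) := by
    rw [toIcoMod, zsmul_eq_mul]
  rw [hmod, dir, Real.cos_sub_int_mul_two_pi, Real.sin_sub_int_mul_two_pi, Complex.cos_arg hz,
    Complex.sin_arg, hnorm]
  ext i; fin_cases i <;> simp [pt, z, mul_div_cancel₀ _ hnorm0]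

def normalLo (l : Fin 6) : E := dir (lo l + π / 2)

def normalHi (l : Fin 6) : E := dir (hi l - π / 2)

theorem hi_sub_lo (l : Fin 6) : hi l - lo l = π / 3 := by unfold hi lo; ring

theorem inner_dir_normalLo (l : Fin 6) (θ : ℝ) : ⟪dir θ, normalLo l⟫ = Real.sin (θ - lo l) := by
  rw [normalLo, inner_dir_s3, show θ - (lo l + π / 2) = θ - lo l - π / 2 by ring,
    Real.cos_sub_pi_div_two]

theorem inner_dir_normalHi (l : Fin 6) (θ : ℝ) : ⟪dir θ, normalHi l⟫ = Real.sin (hi l - θ) := by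
  rw [normalHi, inner_dir_s3, show θ - (hi l - π / 2) = π / 2 - (hi l - θ) by ring,
    Real.cos_pi_div_two_sub]

theorem inner_dir_lo_normalLo (l : Fin 6) : ⟪dir (lo l), normalLo l⟫ = 0 := by
  simp [inner_dir_normalLo]

theorem inner_dir_hi_normalLo (l : Fin 6) : ⟪dir (hi l), normalLo l⟫ = √3 / 2 := by
  rw [inner_dir_normalLo, hi_sub_lo, Real.sin_pi_div_three]

theorem inner_dir_lo_normalHi (l : Fin 6) : ⟪dir (lo l), normalHi l⟫ = √3 / 2 := by
  rw [inner_dir_normalHi, hi_sub_lo, Real.sin_pi_div_three]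

theorem inner_dir_hi_normalHi (l : Fin 6) : ⟪dir (hi l), normalHi l⟫ = 0 := by
  simp [inner_dir_normalHi]

theorem bvec_eq_normalLo_add_normalHi (l : Fin 6) : bvec l = normalLo l + normalHi l := by
  have hlo : lo l + π / 2 = (l : ℕ) * π / 3 + π / 3 := by unfold lo; ring
  have hhi : hi l - π / 2 = (l : ℕ) * π / 3 - π / 3 := by unfold hi; ring
  rw [bvec, normalLo, normalHi, hlo, hhi]
  ext i; fin_cases i <;>
    simp only [dir, pt, WithLp.equiv_symm_apply, Fin.zero_eta, Fin.mk_one, Matrix.cons_val_zero,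
      Matrix.cons_val_one, Matrix.cons_val_fin_one, PiLp.add_apply, cos_add, cos_sub, sin_add,
      sin_sub, cos_pi_div_three, sin_pi_div_three] <;> ring

theorem inner_bvec (l : Fin 6) (x : E) : ⟪x, bvec l⟫ = ⟪x, normalLo l⟫ + ⟪x, normalHi l⟫ := by
  rw [bvec_eq_normalLo_add_normalHi, inner_add_right]

theorem inner_dir_lo_bvec (l : Fin 6) : ⟪dir (lo l), bvec l⟫ = √3 / 2 := by
  rw [inner_bvec, inner_dir_lo_normalLo, inner_dir_lo_normalHi, zero_add]

theorem inner_dir_hi_bvec (l : Fin 6) : ⟪dir (hi l), bvec l⟫ = √3 / 2 := by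
  rw [inner_bvec, inner_dir_hi_normalLo, inner_dir_hi_normalHi, add_zero]

theorem eq_smul_dir_lo_add_smul_dir_hi (l : Fin 6) (x : E) :
    x = (2 / √3 * ⟪x, normalHi l⟫) • dir (lo l) + (2 / √3 * ⟪x, normalLo l⟫) • dir (hi l) := by
  have hLo : ⟪x, normalLo l⟫ = x 0 * -Real.sin (lo l) + x 1 * Real.cos (lo l) := by
    nth_rewrite 1 [eq_pt x]
    rw [normalLo, dir, inner_pt, Real.cos_add_pi_div_two, Real.sin_add_pi_div_two]
  have hHi : ⟪x, normalHi l⟫ = x 0 * Real.sin (hi l) + x 1 * -Real.cos (hi l) := by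
    nth_rewrite 1 [eq_pt x]
    rw [normalHi, dir, inner_pt, Real.cos_sub_pi_div_two, Real.sin_sub_pi_div_two]
  have hdet : Real.sin (hi l) * Real.cos (lo l) - Real.cos (hi l) * Real.sin (lo l) = √3 / 2 := by
    rw [← Real.sin_sub, hi_sub_lo, Real.sin_pi_div_three]
  have h3 : √3 ≠ 0 := by positivity
  ext i; fin_cases i <;>
    simp only [dir, pt, WithLp.equiv_symm_apply, Fin.zero_eta, Fin.mk_one, Matrix.cons_val_zero,
      Matrix.cons_val_one, Matrix.cons_val_fin_one, PiLp.add_apply, PiLp.smul_apply, smul_eq_mul,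
      hLo, hHi] <;> field_simp
  · linear_combination (-2) * x 0 * hdet
  · linear_combination (-2) * x 1 * hdet

theorem mem_wedge_iff (l : Fin 6) (x : E) :
    x ∈ wedge l ↔ 0 ≤ ⟪x, normalLo l⟫ ∧ 0 < ⟪x, normalHi l⟫ := by
  have hpolar : ∀ θ, ⟪‖x‖ • dir θ, normalLo l⟫ = ‖x‖ * Real.sin (θ - lo l) ∧
      ⟪‖x‖ • dir θ, normalHi l⟫ = ‖x‖ * Real.sin (hi l - θ) := fun θ =>
    ⟨by rw [real_inner_smul_left, inner_dir_normalLo],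
      by rw [real_inner_smul_left, inner_dir_normalHi]⟩
  have hwidth := hi_sub_lo l
  constructor
  · rintro ⟨hx, θ, hθlo, hθhi, hxθ⟩
    have hnorm : 0 < ‖x‖ := norm_pos_iff.mpr hx
    rw [hxθ, (hpolar θ).1, (hpolar θ).2]
    exact ⟨mul_nonneg hnorm.le (Real.sin_nonneg_of_nonneg_of_le_pi (by linarith) (by linarith)),
      mul_pos hnorm (Real.sin_pos_of_pos_of_lt_pi (by linarith) (by linarith))⟩
  · rintro ⟨hLo, hHi⟩
    have hx : x ≠ 0 := by rintro rfl; simp at hHi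
    obtain ⟨θ, ⟨hθlo, hθlt⟩, hxθ⟩ := exists_eq_norm_smul_dir_s3 hx (lo l)
    have hnorm : 0 < ‖x‖ := norm_pos_iff.mpr hx
    rw [hxθ, (hpolar θ).1] at hLo
    rw [hxθ, (hpolar θ).2] at hHi
    have hsinLo := nonneg_of_mul_nonneg_right hLo hnorm
    have hsinHi := pos_of_mul_pos_right hHi hnorm.le
    -- `sin ≥ 0` on `[0, 2π)` forces `θ - lo l ≤ π`, and then `sin (hi l - θ) > 0` forces `θ < hi l`
    have hθπ : θ - lo l ≤ π := by
      by_contra! h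
      have := Real.sin_neg_of_neg_of_neg_pi_lt (x := θ - lo l - 2 * π) (by linarith) (by linarith)
      rw [Real.sin_sub_two_pi] at this
      linarith
    have hθhi : θ < hi l := by
      by_contra! h
      linarith [Real.sin_nonpos_of_nonpos_of_neg_pi_le (x := hi l - θ) (by linarith) (by linarith)]
    exact ⟨hx, θ, hθlo, hθhi, hxθ⟩

theorem mem_wedgeAt_iff (l : Fin 6) (p x : E) :
    x ∈ wedgeAt l p ↔ 0 ≤ ⟪x - p, normalLo l⟫ ∧ 0 < ⟪x - p, normalHi l⟫ :=
  mem_wedge_iff l (x - p)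

theorem closure_wedge (l : Fin 6) :
    closure (wedge l) = {x | 0 ≤ ⟪x, normalLo l⟫ ∧ 0 ≤ ⟪x, normalHi l⟫} := by
  apply subset_antisymm
  · refine closure_minimal (fun x hx => ?_) ?_
    · rw [mem_wedge_iff] at hx
      exact ⟨hx.1, hx.2.le⟩
    · rw [Set.ofPred_and]
      exact (isClosed_le continuous_const (by fun_prop)).inter
        (isClosed_le continuous_const (by fun_prop))
  · rintro x ⟨hLo, hHi⟩
    -- push `x` into the wedge along its bounding ray `dir (lo l)`
    have hlim : Tendsto (fun t : ℝ => x + t • dir (lo l)) (𝓝[>] 0) (𝓝 x) := by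
      have hcont : Continuous fun t : ℝ => x + t • dir (lo l) := by fun_prop
      simpa using (hcont.tendsto 0).mono_left nhdsWithin_le_nhds
    refine mem_closure_of_tendsto hlim (eventually_nhdsWithin_of_forall fun t (ht : 0 < t) => ?_)
    rw [mem_wedge_iff, inner_add_left, inner_add_left, real_inner_smul_left,
      real_inner_smul_left, inner_dir_lo_normalLo, inner_dir_lo_normalHi]
    constructor
    · linarith
    · have : 0 < t * (√3 / 2) := by positivity
      linarith

theorem closure_wedgeAt (l : Fin 6) (p : E) :
    closure (wedgeAt l p) = {x | 0 ≤ ⟪x - p, normalLo l⟫ ∧ 0 ≤ ⟪x - p, normalHi l⟫} := by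
  rw [show wedgeAt l p = Homeomorph.subRight p ⁻¹' wedge l from rfl,
    ← Homeomorph.preimage_closure, closure_wedge]
  rfl

theorem exists_mem_segment_smul_eq {l : Fin 6} {x : E} (hLo : 0 ≤ ⟪x, normalLo l⟫)
    (hHi : 0 ≤ ⟪x, normalHi l⟫) :
    ∃ y ∈ segment ℝ (dir (lo l)) (dir (hi l)), (2 / √3 * ⟪x, bvec l⟫) • y = x := by
  have hdecomp := eq_smul_dir_lo_add_smul_dir_hi l x
  rw [inner_bvec]
  rcases (add_nonneg hLo hHi).eq_or_lt with hzero | hpos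
  · refine ⟨dir (lo l), left_mem_segment _ _ _, ?_⟩
    rw [hdecomp, show ⟪x, normalHi l⟫ = 0 by linarith, show ⟪x, normalLo l⟫ = 0 by linarith]
    simp
  · set c := ⟪x, normalLo l⟫ + ⟪x, normalHi l⟫
    refine ⟨(⟪x, normalHi l⟫ / c) • dir (lo l) + (⟪x, normalLo l⟫ / c) • dir (hi l),
      ⟨_, _, div_nonneg hHi hpos.le, div_nonneg hLo hpos.le, by field_simp; ring, rfl⟩, ?_⟩
    conv_rhs => rw [hdecomp]
    rw [smul_add, smul_smul, smul_smul]
    congr 2 <;> field_simp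

theorem tri_eq_setOf_inner (l : Fin 6) :
    tri l = {x | 0 ≤ ⟪x, normalLo l⟫ ∧ 0 ≤ ⟪x, normalHi l⟫ ∧ ⟪x, bvec l⟫ ≤ √3 / 2} := by
  have h3 : (0 : ℝ) < √3 / 2 := by positivity
  apply subset_antisymm
  · refine convexHull_min ?_ ?_
    · rintro x (rfl | rfl | rfl)
      · simp only [Set.mem_ofPred_eq, inner_zero_left]
        exact ⟨le_rfl, le_rfl, h3.le⟩
      · simp only [Set.mem_ofPred_eq, inner_dir_lo_normalLo, inner_dir_lo_normalHi,
          inner_dir_lo_bvec]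
        exact ⟨le_rfl, h3.le, le_rfl⟩
      · simp only [Set.mem_ofPred_eq, inner_dir_hi_normalLo, inner_dir_hi_normalHi,
          inner_dir_hi_bvec]
        exact ⟨h3.le, le_rfl, le_rfl⟩
    · rintro x ⟨hxLo, hxHi, hxb⟩ y ⟨hyLo, hyHi, hyb⟩ a b ha hb hab
      simp only [Set.mem_ofPred_eq, inner_add_left, real_inner_smul_left]
      refine ⟨by positivity, by positivity, ?_⟩
      linarith [mul_le_mul_of_nonneg_left hxb ha, mul_le_mul_of_nonneg_left hyb hb,
        show a * (√3 / 2) + b * (√3 / 2) = √3 / 2 by rw [← add_mul, hab, one_mul]]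
  · rintro x ⟨hLo, hHi, hb⟩
    obtain ⟨y, hy, hxy⟩ := exists_mem_segment_smul_eq hLo hHi
    rw [← hxy]
    refine (convex_convexHull ℝ _).smul_mem_of_zero_mem (subset_convexHull ℝ _ (by simp))
      (segment_subset_convexHull (by simp) (by simp) hy) ⟨?_, ?_⟩
    · exact mul_nonneg (by positivity) (by rw [inner_bvec]; exact add_nonneg hLo hHi)
    · rw [div_mul_eq_mul_div, div_le_one (by positivity)]
      linarith

theorem lTri_eq_setOf_inner {l : Fin 6} (p : E) {h : ℝ} (hh : 0 < h) :
    lTri l p (2 / √3 * h) =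
      {x | 0 ≤ ⟪x - p, normalLo l⟫ ∧ 0 ≤ ⟪x - p, normalHi l⟫ ∧ ⟪x - p, bvec l⟫ ≤ h} := by
  have hscale : 2 / √3 * h * (√3 / 2) = h := by field_simp
  set lam := 2 / √3 * h
  have hlam : 0 < lam := by positivity
  ext x
  constructor
  · rintro ⟨y, hy, rfl⟩
    rw [tri_eq_setOf_inner] at hy
    obtain ⟨hLo, hHi, hb⟩ := hy
    simp only [Set.mem_ofPred_eq, add_sub_cancel_left, real_inner_smul_left]
    refine ⟨by positivity, by positivity, ?_⟩
    rw [← hscale]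
    exact mul_le_mul_of_nonneg_left hb hlam.le
  · rintro ⟨hLo, hHi, hb⟩
    refine ⟨lam⁻¹ • (x - p), ?_, by simp [smul_smul, hlam.ne']⟩
    rw [tri_eq_setOf_inner]
    simp only [Set.mem_ofPred_eq, real_inner_smul_left]
    refine ⟨by positivity, by positivity, ?_⟩
    rw [inv_mul_le_iff₀ hlam, hscale]
    exact hb

theorem interior_lTri {l : Fin 6} (p : E) {h : ℝ} (hh : 0 < h) :
    interior (lTri l p (2 / √3 * h)) =
      {x | 0 < ⟪x - p, normalLo l⟫ ∧ 0 < ⟪x - p, normalHi l⟫ ∧ ⟪x - p, bvec l⟫ < h} := by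
  have hLo0 : normalLo l ≠ 0 := dir_ne_zero _
  have hHi0 : normalHi l ≠ 0 := dir_ne_zero _
  have hb0 : bvec l ≠ 0 := dir_ne_zero _
  have hLo := interior_setOf_inner_sub_mem hLo0 p (Set.Ici 0)
  have hHi := interior_setOf_inner_sub_mem hHi0 p (Set.Ici 0)
  have hb := interior_setOf_inner_sub_mem hb0 p (Set.Iic h)
  simp only [Set.mem_Ici, Set.mem_Iic, interior_Ici, interior_Iic, Set.mem_Ioi,
    Set.mem_Iio] at hLo hHi hb
  rw [lTri_eq_setOf_inner p hh, Set.ofPred_and, Set.ofPred_and, interior_inter, interior_inter,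
    hLo, hHi, hb, ← Set.ofPred_and, ← Set.ofPred_and]

theorem min_bisector_coordinate_gives_empty_lTri_general
    (P : Finset E) (pi pj : E) (l : Fin 6)
    (hj : pj ∈ Vl P l pi)
    (hmin : ∀ r ∈ Vl P l pi, ⟪pj - pi, bvec l⟫ ≤ ⟪r - pi, bvec l⟫) :
    0 < (2 / Real.sqrt 3) * ⟪pj - pi, bvec l⟫ ∧
    ({pi} ∪ {x ∈ closure (wedgeAt l pi) | ⟪x - pi, bvec l⟫ ≤ ⟪pj - pi, bvec l⟫}) =
      lTri l pi ((2 / Real.sqrt 3) * ⟪pj - pi, bvec l⟫) ∧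
    (∀ r ∈ P, r ∉ interior (lTri l pi ((2 / Real.sqrt 3) * ⟪pj - pi, bvec l⟫))) ∧
    pi ∈ (fun x => pi + ((2 / Real.sqrt 3) * ⟪pj - pi, bvec l⟫) • x) '' triVerts l ∧
    pj ∈ (fun x => pi + ((2 / Real.sqrt 3) * ⟪pj - pi, bvec l⟫) • x) ''
      segment ℝ (dir (lo l)) (dir (hi l)) := by
  obtain ⟨-, hjW⟩ := hj
  rw [mem_wedgeAt_iff] at hjW
  have hpos : 0 < ⟪pj - pi, bvec l⟫ := by rw [inner_bvec]; linarith [hjW.1, hjW.2]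
  refine ⟨by positivity, ?_, ?_, ⟨0, by simp [triVerts], by simp⟩, ?_⟩
  · rw [lTri_eq_setOf_inner pi hpos, closure_wedgeAt, Set.union_eq_self_of_subset_left]
    · ext x
      simp [and_assoc]
    · simp [hpos.le]
  · intro r hr hint
    rw [interior_lTri pi hpos] at hint
    exact hint.2.2.not_ge (hmin r ⟨hr, (mem_wedgeAt_iff l pi r).mpr ⟨hint.1.le, hint.2.1⟩⟩)
  · obtain ⟨y, hy, hxy⟩ := exists_mem_segment_smul_eq hjW.1 hjW.2.le
    exact ⟨y, hy, by simp only [hxy, add_sub_cancel]⟩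

/-- if `p_j ∈ V_l(p_i)` has the minimum `b_l`-coordinate, then
`T = {p_i} ∪ {x ∈ closure (W_l(p_i)) : ⟨x - p_i, b_l⟩ ≤ ⟨p_j - p_i, b_l⟩}` is the
`l`-tri `p_i + λ∆_l` with `λ = (2/√3)⟨p_j - p_i, b_l⟩ > 0`, it is empty with respect
to `P`, has `p_i` as one of its vertices, and has `p_j` on the side opposite `p_i`. -/
theorem min_bisector_coordinate_gives_empty_lTri
    (P : Finset E) (pi pj : E) (hpi : pi ∈ P) (l : Fin 6)
    (hj : pj ∈ Vl P l pi)
    (hmin : ∀ r ∈ Vl P l pi, ⟪pj - pi, bvec l⟫ ≤ ⟪r - pi, bvec l⟫) :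
    0 < (2 / Real.sqrt 3) * ⟪pj - pi, bvec l⟫ ∧
    ({pi} ∪ {x ∈ closure (wedgeAt l pi) | ⟪x - pi, bvec l⟫ ≤ ⟪pj - pi, bvec l⟫}) =
      lTri l pi ((2 / Real.sqrt 3) * ⟪pj - pi, bvec l⟫) ∧
    (∀ r ∈ P, r ∉ interior (lTri l pi ((2 / Real.sqrt 3) * ⟪pj - pi, bvec l⟫))) ∧
    pi ∈ (fun x => pi + ((2 / Real.sqrt 3) * ⟪pj - pi, bvec l⟫) • x) '' triVerts l ∧
    pj ∈ (fun x => pi + ((2 / Real.sqrt 3) * ⟪pj - pi, bvec l⟫) • x) ''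
      segment ℝ (dir (lo l)) (dir (hi l)) :=
  min_bisector_coordinate_gives_empty_lTri_general P pi pj l hj hmin
end
end
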